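/- arXiv:0812.1612 — 6 statements merged into one kernel-verified Lean document; each statement's English description precedes it below -/
import Mathlib

section
/- Let k be a field of characteristic zero and let R be a commutative k-algebra equipped with a Poisson bracket. Then every minimal prime ideal of R is a Poisson ideal. -/
/-- A Poisson bracket on a commutative `k`-algebra `R`: a `k`-bilinear,
antisymmetric map satisfying the Jacobi and Leibniz identities. -/
structure PoissonBracket (k : Type*) (R : Type*) [CommRing k] [CommRing R] [Algebra k R] where
  bracket : R → R → R
  add_left : ∀ a b c : R, bracket (a + b) c = bracket a c + bracket b c
  add_right : ∀ a b c : R, bracket a (b + c) = bracket a b + bracket a c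
  smul_left : ∀ (t : k) (a b : R), bracket (t • a) b = t • bracket a b
  smul_right : ∀ (t : k) (a b : R), bracket a (t • b) = t • bracket a b
  antisymm : ∀ a b : R, bracket a b = - bracket b a
  jacobi : ∀ a b c : R,
    bracket a (bracket b c) + bracket b (bracket c a) + bracket c (bracket a b) = 0
  leibniz : ∀ a b c : R, bracket a (b * c) = bracket a b * c + b * bracket a c

/-- An ideal `I` is a Poisson ideal if `{R, I} ⊆ I`. -/
def IsPoissonIdeal {k R : Type*} [CommRing k] [CommRing R] [Algebra k R]
    (B : PoissonBracket k R) (I : Ideal R) : Prop :=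
  ∀ a : R, ∀ x ∈ I, B.bracket a x ∈ I

/-- The Poisson core of an ideal `J`: the largest Poisson ideal contained in `J`,
i.e. the sum of all Poisson ideals contained in `J`. -/
def poissonCore {k R : Type*} [CommRing k] [CommRing R] [Algebra k R]
    (B : PoissonBracket k R) (J : Ideal R) : Ideal R :=
  sSup {I : Ideal R | IsPoissonIdeal B I ∧ I ≤ J}

/-- A Poisson-primitive ideal: the Poisson core of some maximal ideal. -/
def IsPoissonPrimitive {k R : Type*} [CommRing k] [CommRing R] [Algebra k R]
    (B : PoissonBracket k R) (P : Ideal R) : Prop :=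
  ∃ m : Ideal R, m.IsMaximal ∧ poissonCore B m = P

/-!
The bracket `{a, -}` is a `k`-derivation `D` of `R`. In characteristic zero a derivation maps
nilpotents to nilpotents: if `x ^ (p + 1) * D x ^ q = 0`, then differentiating
`x ^ (p + 1) * D x ^ (q + 1) = 0` and discarding the multiple of the hypothesis leaves
`(p + 1) • x ^ p * D x ^ (q + 2) = 0`, so `x ^ n = 0` forces `D x ^ (2 * n) = 0`.
If `x` lies in the minimal prime `Q`, then `s * x` is nilpotent for some `s ∉ Q`, because `Q R_Q`
is the only prime of `R_Q`. Hence `D (s * x) = s * D x + x * D s ∈ Q`, and so `D x ∈ Q`.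
-/

namespace Derivation

variable {S R : Type*} [CommSemiring S] [CommRing R] [Algebra S R] [IsAddTorsionFree R]
  (D : Derivation S R R)

theorem pow_mul_pow_add_two_eq_zero {x : R} {p q : ℕ} (h : x ^ (p + 1) * D x ^ q = 0) :
    x ^ p * D x ^ (q + 2) = 0 := by
  have hD : D (x ^ (p + 1) * D x ^ (q + 1)) = 0 := by
    rw [pow_succ (D x), ← mul_assoc, h, zero_mul, map_zero]
  rw [leibniz, leibniz_pow, leibniz_pow, Nat.add_sub_cancel, Nat.add_sub_cancel] at hD
  have : (p + 1) • (x ^ p * D x ^ (q + 2)) = 0 :=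
    calc (p + 1) • (x ^ p * D x ^ (q + 2))
        = D x ^ (q + 1) • ((p + 1) • x ^ p • D x)
            + x ^ (p + 1) • ((q + 1) • D x ^ q • D (D x))
            - (q + 1) • D (D x) * (x ^ (p + 1) * D x ^ q) := by
          simp only [smul_eq_mul, nsmul_eq_mul]; push_cast; ring
      _ = 0 := by rw [h, add_comm, hD]; simp
  exact (IsAddTorsionFree.nsmul_right_injective p.succ_ne_zero).eq_iff.mp
    (this.trans (smul_zero _).symm)

theorem pow_eq_zero_of_pow_mul_pow_eq_zero {x : R} {p q : ℕ} (h : x ^ p * D x ^ q = 0) :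
    D x ^ (q + 2 * p) = 0 := by
  induction p generalizing q with
  | zero => simpa using h
  | succ p ih =>
    simpa [Nat.mul_succ, Nat.add_assoc, Nat.add_comm 2] using
      ih (D.pow_mul_pow_add_two_eq_zero h)

theorem isNilpotent_apply {x : R} (hx : IsNilpotent x) : IsNilpotent (D x) := by
  obtain ⟨n, hn⟩ := hx
  refine ⟨2 * n, ?_⟩
  simpa using D.pow_eq_zero_of_pow_mul_pow_eq_zero (p := n) (q := 0) (by simp [hn])

end Derivation

theorem Ideal.exists_notMem_isNilpotent_mul_of_mem_minimalPrimes {R : Type*} [CommRing R]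
    {Q : Ideal R} (hQ : Q ∈ minimalPrimes R) {x : R} (hx : x ∈ Q) :
    ∃ s ∉ Q, IsNilpotent (s * x) := by
  have := hQ.isPrime
  have := Ring.KrullDimLE.of_isLocalization Q hQ (Localization.AtPrime Q)
  obtain ⟨m, hm⟩ := Ring.KrullDimLE.isNilpotent_iff_mem_maximalIdeal.mpr
    ((IsLocalization.AtPrime.to_map_mem_maximal_iff (Localization.AtPrime Q) Q x).mpr hx)
  rw [← map_pow, IsLocalization.map_eq_zero_iff Q.primeCompl] at hm
  obtain ⟨⟨s, hs⟩, hsx⟩ := hm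
  refine ⟨s, hs, m + 1, ?_⟩
  rw [mul_pow, pow_succ s, pow_succ' x]
  linear_combination s ^ m * x * hsx

def PoissonBracket.toDerivation {k R : Type*} [CommRing k] [CommRing R] [Algebra k R]
    (B : PoissonBracket k R) (a : R) : Derivation k R R :=
  Derivation.mk' ⟨⟨B.bracket a, B.add_right a⟩, (B.smul_right · a)⟩ fun x y => by
    simp only [LinearMap.coe_mk, AddHom.coe_mk, B.leibniz, smul_eq_mul]
    ring

/-- In characteristic zero, every minimal prime ideal is a Poisson ideal. -/
theorem minimalPrime_isPoissonIdeal (k R : Type*) [Field k] [CharZero k] [CommRing R]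
    [Algebra k R] (B : PoissonBracket k R) (Q : Ideal R) (hQ : Q ∈ minimalPrimes R) :
    IsPoissonIdeal B Q := by
  have := IsAddTorsionFree.of_isTorsionFree k R
  have hQprime := hQ.isPrime
  intro a x hx
  let D := B.toDerivation a
  obtain ⟨s, hs, hsx⟩ := Ideal.exists_notMem_isNilpotent_mul_of_mem_minimalPrimes hQ hx
  have hDsx : s * D x + x * D s ∈ Q := by
    simpa [D.leibniz] using nilpotent_iff_mem_prime.mp (D.isNilpotent_apply hsx) Q hQprime
  have hsDx : s * D x ∈ Q := (Q.add_mem_iff_left (Q.mul_mem_right _ hx)).mp hDsx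
  exact (hQprime.mem_or_mem hsDx).resolve_left hs
end

section
/- Let k be a field of characteristic zero and let R be a commutative noetherian k-algebra equipped with a Poisson bracket. Then every Poisson-prime ideal of R is a prime ideal; consequently the Poisson-prime ideals of R coincide with the prime ideals that are Poisson ideals. -/
/-- A Poisson-prime ideal: a proper Poisson ideal `P` such that whenever a product of
Poisson ideals lies in `P`, one of them lies in `P`. -/
def IsPoissonPrime {k R : Type*} [CommRing k] [CommRing R] [Algebra k R]
    (B : PoissonBracket k R) (P : Ideal R) : Prop :=
  P ≠ ⊤ ∧ IsPoissonIdeal B P ∧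
    ∀ I J : Ideal R, IsPoissonIdeal B I → IsPoissonIdeal B J → I * J ≤ P → I ≤ P ∨ J ≤ P

/-! In characteristic zero the radical of an ideal stable under a derivation `D` is again
stable, because `x ^ n ∈ P` forces `(D x) ^ (2 n) ∈ P`. A Poisson-prime ideal `P` of a noetherian
ring contains a power of its radical, which is Poisson, so `P` is radical. Every minimal prime `Q`
over `P` is then Poisson: some `y ∉ Q` satisfies `Q y ⊆ P`. Finally `P` contains the product of
its finitely many minimal primes, so it contains, hence equals, one of them. -/

theorem Ideal.exists_notMem_forall_mul_mem_radical {R : Type*} [CommRing R] {I Q : Ideal R}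
    (hfin : I.minimalPrimes.Finite) (hQ : Q ∈ I.minimalPrimes) :
    ∃ y ∉ Q, ∀ x ∈ Q, x * y ∈ I.radical := by
  classical
  have hothers : ¬ (hfin.toFinset.erase Q).inf id ≤ Q := by
    rw [hQ.isPrime.inf_le']
    rintro ⟨Q', hQ', hle⟩
    rw [Finset.mem_erase, hfin.mem_toFinset] at hQ'
    exact hQ'.1 (le_antisymm hle (hQ.2 hQ'.2.1 hle))
  obtain ⟨y, hy, hyQ⟩ := SetLike.not_le_iff_exists.mp hothers
  refine ⟨y, hyQ, fun x hx => ?_⟩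
  rw [← Ideal.sInf_minimalPrimes, Ideal.mem_sInf]
  intro Q' hQ'
  by_cases h : Q' = Q
  · rw [h]
    exact Q.mul_mem_right y hx
  · exact Q'.mul_mem_left x
      (Finset.inf_le (f := id) (Finset.mem_erase.mpr ⟨h, hfin.mem_toFinset.mpr hQ'⟩) hy)

def PoissonBracket.hamiltonian {k R : Type*} [CommRing k] [CommRing R] [Algebra k R]
    (B : PoissonBracket k R) (a : R) : Derivation k R R :=
  Derivation.mk'
    { toFun := B.bracket a
      map_add' := B.add_right a
      map_smul' := fun t x => B.smul_right t a x }
    (fun b c => by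
      change B.bracket a (b * c) = b * B.bracket a c + c * B.bracket a b
      rw [B.leibniz]
      ring)

namespace Derivation

variable {k R : Type*} [Field k] [CharZero k] [CommRing R] [Algebra k R]
  (D : Derivation k R R) {P : Ideal R}

-- Apply `D` to `x^(m+1) (Dx)^j`, multiply by `Dx` and remove the multiple of `D(Dx)`: what is left
-- is `(m+1) x^m (Dx)^(j+2)`, and `m + 1` is a unit in characteristic zero.
theorem pow_mul_pow_add_two_mem (hD : ∀ z ∈ P, D z ∈ P) {x : R} {m j : ℕ}
    (h : x ^ (m + 1) * D x ^ j ∈ P) : x ^ m * D x ^ (j + 2) ∈ P := by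
  have key : D x * D (x ^ (m + 1) * D x ^ j) - (j : R) * D (D x) * (x ^ (m + 1) * D x ^ j)
      = ((m + 1 : ℕ) : R) * (x ^ m * D x ^ (j + 2)) := by
    rw [leibniz, leibniz_pow, leibniz_pow]
    rcases j with _ | j <;> simp only [smul_eq_mul, nsmul_eq_mul] <;> push_cast <;> ring
  have hmem := P.sub_mem (P.mul_mem_left (D x) (hD _ h)) (P.mul_mem_left ((j : R) * D (D x)) h)
  rw [key] at hmem
  have hunit : IsUnit ((m + 1 : ℕ) : R) := by
    simpa using (IsUnit.mk0 ((m + 1 : ℕ) : k) (Nat.cast_ne_zero.mpr m.succ_ne_zero)).map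
      (algebraMap k R)
  exact (P.unit_mul_mem_iff_mem hunit).mp hmem

theorem pow_mul_pow_mem_of_pow_mem (hD : ∀ z ∈ P, D z ∈ P) {x : R} :
    ∀ {j m : ℕ}, x ^ (m + j) ∈ P → x ^ m * D x ^ (2 * j) ∈ P
  | 0, m, h => by simpa using h
  | j + 1, m, h => by
    have ih := pow_mul_pow_mem_of_pow_mem hD (j := j) (m := m + 1) (by rwa [add_right_comm])
    exact D.pow_mul_pow_add_two_mem hD ih

theorem apply_mem_radical (hD : ∀ z ∈ P, D z ∈ P) : ∀ z ∈ P.radical, D z ∈ P.radical := by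
  rintro x ⟨n, hn⟩
  exact ⟨2 * n, by simpa using D.pow_mul_pow_mem_of_pow_mem hD (m := 0) (by simpa using hn)⟩

end Derivation

namespace IsPoissonIdeal

variable {k R : Type*} [CommRing R]

section CommRing

variable [CommRing k] [Algebra k R] {B : PoissonBracket k R}

theorem top : IsPoissonIdeal B ⊤ := fun _ _ _ => trivial

theorem mul {I J : Ideal R} (hI : IsPoissonIdeal B I) (hJ : IsPoissonIdeal B J) :
    IsPoissonIdeal B (I * J) := by
  intro a x hx
  refine Submodule.mul_induction_on hx (fun i hi j hj => ?_) (fun y z hy hz => ?_)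
  · rw [B.leibniz]
    exact add_mem (Ideal.mul_mem_mul (hI a i hi) hj) (Ideal.mul_mem_mul hi (hJ a j hj))
  · rw [B.add_right]
    exact add_mem hy hz

theorem prod {ι : Type*} {s : Finset ι} {f : ι → Ideal R}
    (hf : ∀ i ∈ s, IsPoissonIdeal B (f i)) : IsPoissonIdeal B (∏ i ∈ s, f i) := by
  classical
  induction s using Finset.induction_on with
  | empty => simpa [Ideal.one_eq_top] using (top : IsPoissonIdeal B ⊤)
  | insert i s hi ih =>
    rw [Finset.prod_insert hi]
    exact (hf i (s.mem_insert_self i)).mul (ih fun j hj => hf j (Finset.mem_insert_of_mem hj))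

-- `{a, x} y = {a, x y} - x {a, y} ∈ Q` for `x ∈ Q`.
theorem of_isPrime_of_mul_mem {P Q : Ideal R} (hP : IsPoissonIdeal B P) (hQ : Q.IsPrime)
    (hPQ : P ≤ Q) {y : R} (hy : y ∉ Q) (hmul : ∀ x ∈ Q, x * y ∈ P) : IsPoissonIdeal B Q := by
  intro a x hx
  have hxy : B.bracket a (x * y) ∈ Q := hPQ (hP a _ (hmul x hx))
  rw [B.leibniz, Q.add_mem_iff_left (Q.mul_mem_right _ hx)] at hxy
  exact (hQ.mem_or_mem hxy).resolve_right hy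

end CommRing

variable [Field k] [CharZero k] [Algebra k R] {B : PoissonBracket k R} {P : Ideal R}

theorem radical (hP : IsPoissonIdeal B P) : IsPoissonIdeal B P.radical :=
  fun a => (B.hamiltonian a).apply_mem_radical (hP a)

theorem of_mem_minimalPrimes (hP : IsPoissonIdeal B P) (hfin : P.minimalPrimes.Finite)
    {Q : Ideal R} (hQ : Q ∈ P.minimalPrimes) : IsPoissonIdeal B Q := by
  obtain ⟨y, hy, hmul⟩ := Ideal.exists_notMem_forall_mul_mem_radical hfin hQ
  exact hP.radical.of_isPrime_of_mul_mem hQ.isPrime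
    (hQ.isPrime.radical_le_iff.mpr hQ.1.2) hy hmul

end IsPoissonIdeal

theorem Ideal.IsPrime.isPoissonPrime {k R : Type*} [CommRing k] [CommRing R] [Algebra k R]
    {B : PoissonBracket k R} {P : Ideal R} (hP : P.IsPrime) (hB : IsPoissonIdeal B P) :
    IsPoissonPrime B P :=
  ⟨hP.ne_top, hB, fun _ _ _ _ h => hP.mul_le.mp h⟩

namespace IsPoissonPrime

variable {k R : Type*} [CommRing R] {P : Ideal R}

section CommRing

variable [CommRing k] [Algebra k R] {B : PoissonBracket k R}

theorem exists_le_of_prod_le (hP : IsPoissonPrime B P) {ι : Type*} {s : Finset ι}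
    {f : ι → Ideal R} (hf : ∀ i ∈ s, IsPoissonIdeal B (f i)) (h : ∏ i ∈ s, f i ≤ P) :
    ∃ i ∈ s, f i ≤ P := by
  classical
  induction s using Finset.induction_on with
  | empty => exact absurd (top_le_iff.mp (by simpa [Ideal.one_eq_top] using h)) hP.1
  | insert i s hi ih =>
    rw [Finset.prod_insert hi] at h
    have hs : ∀ j ∈ s, IsPoissonIdeal B (f j) := fun j hj => hf j (Finset.mem_insert_of_mem hj)
    rcases hP.2.2 _ _ (hf i (s.mem_insert_self i)) (IsPoissonIdeal.prod hs) h with hle | hle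
    · exact ⟨i, s.mem_insert_self i, hle⟩
    · obtain ⟨j, hj, hle⟩ := ih hs hle
      exact ⟨j, Finset.mem_insert_of_mem hj, hle⟩

theorem le_of_pow_le (hP : IsPoissonPrime B P) {I : Ideal R} (hI : IsPoissonIdeal B I) {n : ℕ}
    (h : I ^ n ≤ P) : I ≤ P := by
  rw [← Finset.card_range n, ← Finset.prod_const] at h
  obtain ⟨_, _, hle⟩ := hP.exists_le_of_prod_le (fun _ _ => hI) h
  exact hle

end CommRing

variable [Field k] [CharZero k] [Algebra k R] [IsNoetherianRing R] {B : PoissonBracket k R}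

theorem radical_eq (hP : IsPoissonPrime B P) : P.radical = P := by
  obtain ⟨n, hn⟩ := P.exists_radical_pow_le_of_fg (IsNoetherian.noetherian _)
  exact le_antisymm (hP.le_of_pow_le hP.2.1.radical hn) P.le_radical

-- `P` contains the product of its finitely many minimal primes, all of which are Poisson.
theorem isPrime (hP : IsPoissonPrime B P) : P.IsPrime := by
  have hfin := P.finite_minimalPrimes_of_isNoetherianRing R
  have hprod : ∏ Q ∈ hfin.toFinset, Q ≤ P :=
    calc ∏ Q ∈ hfin.toFinset, Q ≤ hfin.toFinset.inf id := Ideal.prod_le_inf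
      _ = P := by
        rw [Finset.inf_id_eq_sInf, hfin.coe_toFinset, Ideal.sInf_minimalPrimes, hP.radical_eq]
  obtain ⟨Q, hQ, hQP⟩ := hP.exists_le_of_prod_le
    (fun Q hQ => hP.2.1.of_mem_minimalPrimes hfin (hfin.mem_toFinset.mp hQ)) hprod
  rw [hfin.mem_toFinset] at hQ
  exact le_antisymm hQ.1.2 hQP ▸ hQ.isPrime

end IsPoissonPrime

/-- every Poisson-prime ideal of a commutative noetherian Poisson algebra
over a characteristic-zero field is prime; consequently the Poisson-prime ideals coincide
with the prime Poisson ideals. -/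
theorem poissonPrime_iff_prime_poisson (k R : Type*) [Field k] [CharZero k] [CommRing R]
    [Algebra k R] [IsNoetherianRing R] (B : PoissonBracket k R) :
    (∀ P : Ideal R, IsPoissonPrime B P → P.IsPrime) ∧
    (∀ P : Ideal R, IsPoissonPrime B P ↔ (P.IsPrime ∧ IsPoissonIdeal B P)) := by
  refine ⟨fun _ hP => hP.isPrime, fun _ => ⟨fun hP => ⟨hP.isPrime, hP.2.1⟩, ?_⟩⟩
  rintro ⟨hprime, hpoisson⟩
  exact hprime.isPoissonPrime hpoisson
end

section
/- Let k be a field of characteristic zero and let R be a commutative noetherian k-algebra equipped with a Poisson bracket. Then the Poisson prime spectrum P.spec R is sauber: every nonempty irreducible closed subset F of P.spec R has exactly one generic point, i.e. there is a unique prime Poisson ideal Q ∈ F whose closure in P.spec R equals F. -/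
open Topology

theorem quasiSober_subtype_of_isGenericPoint {X : Type*} [TopologicalSpace X] [QuasiSober X]
    {p : X → Prop}
    (h : ∀ T : Set X, (∀ y ∈ T, p y) → IsIrreducible T → ∀ x, IsGenericPoint x (closure T) → p x) :
    QuasiSober (Subtype p) where
  sober {Z} hZ hZc := by
    have hZ' : IsIrreducible ((↑) '' Z : Set X) := hZ.image _ continuous_subtype_val.continuousOn
    obtain ⟨x, hx⟩ := QuasiSober.sober hZ'.closure isClosed_closure
    refine ⟨⟨x, h _ (Set.forall_mem_image.2 fun y _ => y.2) hZ' x hx⟩, ?_⟩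
    have hval : IsInducing (Subtype.val : Subtype p → X) := .subtypeVal
    rw [IsGenericPoint, hval.closure_eq_preimage_closure_image, Set.image_singleton, hx.def,
      ← hval.closure_eq_preimage_closure_image, hZc.closure_eq]

theorem PrimeSpectrum.asIdeal_eq_vanishingIdeal_of_isGenericPoint {R : Type*} [CommSemiring R]
    {T : Set (PrimeSpectrum R)} {x : PrimeSpectrum R} (hx : IsGenericPoint x (closure T)) :
    x.asIdeal = vanishingIdeal T := by
  rw [← vanishingIdeal_singleton, ← vanishingIdeal_closure, hx.def, vanishingIdeal_closure]

section Poisson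

variable {k R : Type*} [CommRing k] [CommRing R] [Algebra k R] (B : PoissonBracket k R)

theorem isPoissonIdeal_vanishingIdeal {T : Set (PrimeSpectrum R)}
    (hT : ∀ p ∈ T, IsPoissonIdeal B p.asIdeal) :
    IsPoissonIdeal B (PrimeSpectrum.vanishingIdeal T) := by
  intro a x hx
  rw [PrimeSpectrum.mem_vanishingIdeal] at hx ⊢
  exact fun p hp => hT p hp a x (hx p hp)

instance quasiSober_poissonSpectrum :
    QuasiSober {p : PrimeSpectrum R // IsPoissonIdeal B p.asIdeal} :=
  quasiSober_subtype_of_isGenericPoint fun T hT _ x hx => by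
    rw [PrimeSpectrum.asIdeal_eq_vanishingIdeal_of_isGenericPoint hx]
    exact isPoissonIdeal_vanishingIdeal B hT

end Poisson

theorem pSpec_sauber_general (k R : Type*) [Field k] [CommRing R]
    [Algebra k R] (B : PoissonBracket k R)
    (F : Set {p : PrimeSpectrum R // IsPoissonIdeal B p.asIdeal})
    (hF : IsClosed F) (hirr : IsIrreducible F) :
    ∃! Q : {p : PrimeSpectrum R // IsPoissonIdeal B p.asIdeal},
      Q ∈ F ∧ closure {Q} = F := by
  obtain ⟨Q, hQ⟩ := QuasiSober.sober hirr hF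
  exact ⟨Q, ⟨hQ.mem, hQ.def⟩, fun Q' hQ' => IsGenericPoint.eq hQ'.2 hQ⟩

/-- the Poisson prime spectrum of a commutative noetherian Poisson algebra
over a characteristic-zero field is sauber: every nonempty irreducible closed subset has
exactly one generic point. -/
theorem pSpec_sauber (k R : Type*) [Field k] [CharZero k] [CommRing R]
    [Algebra k R] [IsNoetherianRing R] (B : PoissonBracket k R)
    (F : Set {p : PrimeSpectrum R // IsPoissonIdeal B p.asIdeal})
    (hF : IsClosed F) (hirr : IsIrreducible F) :
    ∃! Q : {p : PrimeSpectrum R // IsPoissonIdeal B p.asIdeal},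
      Q ∈ F ∧ closure {Q} = F :=
  pSpec_sauber_general k R B F hF hirr
end

section
/- Let k be a field of characteristic zero and let R be a commutative affine (finitely generated) k-algebra equipped with a Poisson bracket. Then the inclusion P.prim R → P.spec R is a quasi-homeomorphism: for every closed subset F of P.spec R, F equals the closure in P.spec R of F ∩ P.prim R. Equivalently, every prime Poisson ideal of R is an intersection of Poisson-primitive ideals. -/
/-!
A finitely generated algebra over a field is a Jacobson ring, so a prime Poisson ideal `Q` is the
intersection of the maximal ideals `M ⊇ Q`, hence of their Poisson cores, which still contain `Q`.
The point is that these cores are prime. Let `a, b` lie outside the core of a prime `J`, and let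
`p, q` be the least numbers of brackets moving them out of `J`. Modulo `J`, iterated brackets of
that least length are symmetric in their letters (Jacobi), so, `k` being infinite, polarization
gives one `z` with `{z, -}ᵖ a ∉ J` and `{z, -}^q b ∉ J`. By the Leibniz rule,
`{z, -}^(p+q) (a b) ≡ (p+q choose p) {z, -}ᵖ a * {z, -}^q b ≢ 0 (mod J)` in characteristic zero,
so `a b` is not in the core either. Closed sets being stable under specialization, the
topological statement follows.
-/

open Finset in
theorem Derivation.iterate_leibniz {k A : Type*} [CommRing k] [CommRing A] [Algebra k A]
    (D : Derivation k A A) (n : ℕ) (a b : A) :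
    D^[n] (a * b) = ∑ ij ∈ antidiagonal n, n.choose ij.1 • (D^[ij.1] a * D^[ij.2] b) := by
  induction n with
  | zero => simp
  | succ n ih =>
    rw [sum_antidiagonal_choose_succ_nsmul (M := A) (fun i j ↦ D^[i] a * D^[j] b) n]
    simp only [Function.iterate_succ_apply', ih, map_sum, map_nsmul, Derivation.leibniz,
      smul_eq_mul, nsmul_add, sum_add_distrib]
    refine congrArg₂ (· + ·) rfl (sum_congr rfl fun ⟨i, j⟩ hij ↦ ?_)
    rw [n.choose_symm_of_eq_add (mem_antidiagonal.1 hij).symm, mul_comm (D^[j] b)]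

open Finset in
theorem Derivation.iterate_mul_notMem {k A : Type*} [Field k] [CharZero k] [CommRing A]
    [Algebra k A] (D : Derivation k A A) {J : Ideal A} [J.IsPrime] {a b : A} {p q : ℕ}
    (ha : ∀ i < p, D^[i] a ∈ J) (hb : ∀ j < q, D^[j] b ∈ J)
    (hpa : D^[p] a ∉ J) (hqb : D^[q] b ∉ J) :
    D^[p + q] (a * b) ∉ J := by
  have hpq : (p, q) ∈ antidiagonal (p + q) := Finset.HasAntidiagonal.mem_antidiagonal.2 rfl
  have hrest : ∑ ij ∈ (antidiagonal (p + q)).erase (p, q),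
      (p + q).choose ij.1 • (D^[ij.1] a * D^[ij.2] b) ∈ J := by
    refine J.sum_mem fun ⟨i, j⟩ hij ↦ ?_
    obtain ⟨hne, hij⟩ := mem_erase.1 hij
    rw [Finset.HasAntidiagonal.mem_antidiagonal] at hij
    rcases lt_or_ge i p with hi | hi
    · exact J.smul_of_tower_mem _ (J.mul_mem_right _ (ha i hi))
    · refine J.smul_of_tower_mem _ (J.mul_mem_left _ (hb j ?_))
      by_contra hj
      exact hne (Prod.ext (by simp; omega) (by simp; omega))
  have hchoose : IsUnit (((p + q).choose p : ℕ) : A) := by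
    rw [← _root_.map_natCast (algebraMap k A)]
    exact (isUnit_iff_ne_zero.2 (Nat.cast_ne_zero.2 (Nat.choose_pos (by omega)).ne')).map _
  rw [Derivation.iterate_leibniz, ← add_sum_erase _ _ hpq]
  intro hmem
  have hlead := (Submodule.add_mem_iff_left J hrest).1 hmem
  rw [nsmul_eq_mul] at hlead
  rcases Ideal.IsPrime.mem_or_mem ‹_› hlead with h | h
  · exact Ideal.IsPrime.ne_top ‹_› (J.eq_top_of_isUnit_mem h hchoose)
  · exact (Ideal.IsPrime.mul_notMem ‹_› hpa hqb) h

theorem List.perm_ofFn_of_sum_single_eq {ι : Type*} {n : ℕ} {f g : Fin n → ι}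
    (h : ∑ j, Finsupp.single (f j) 1 = ∑ j, Finsupp.single (g j) 1) :
    (List.ofFn f).Perm (List.ofFn g) := by
  classical
  have key (f : Fin n → ι) :
      ∑ j, Finsupp.single (f j) 1 = Multiset.toFinsupp ↑(List.ofFn f) := by
    rw [← Fin.univ_val_map, ← Multiset.sum_map_singleton (Multiset.map f _), Multiset.map_map,
      ← Finset.sum_eq_multiset_sum, map_sum]
    simp [Multiset.toFinsupp_singleton]
  rw [key, key] at h
  exact Multiset.coe_eq_coe.1 (Multiset.toFinsupp.injective h)

theorem MvPolynomial.exists_eval_algebraMap_ne_zero {k S σ : Type*} [Field k] [Infinite k]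
    [CommRing S] [IsDomain S] [Algebra k S] {P : MvPolynomial σ S} (hP : P ≠ 0) :
    ∃ t : σ → k, eval (algebraMap k S ∘ t) P ≠ 0 := by
  by_contra! h
  refine hP (funext_set (fun _ ↦ Set.range (algebraMap k S))
    (fun _ ↦ Set.infinite_range_of_injective (algebraMap k S).injective) fun x hx ↦ ?_)
  choose t ht using fun i ↦ hx i (Set.mem_univ i)
  rw [show x = algebraMap k S ∘ t from _root_.funext fun i ↦ (ht i).symm, h t, map_zero]

namespace PoissonBracket

section

variable {k R : Type*} [CommRing k] [CommRing R] [Algebra k R] (B : PoissonBracket k R)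

theorem bracket_one (c : R) : B.bracket c 1 = 0 := by
  simpa using B.leibniz c 1 1

def ham : R →ₗ[k] Derivation k R R where
  toFun c :=
    { toFun := B.bracket c
      map_add' := B.add_right c
      map_smul' t x := B.smul_right t c x
      map_one_eq_zero' := B.bracket_one c
      leibniz' a b := by simp only [LinearMap.coe_mk, AddHom.coe_mk, B.leibniz, smul_eq_mul]; ring }
  map_add' c c' := Derivation.ext fun x ↦ B.add_left c c' x
  map_smul' t c := Derivation.ext fun x ↦ B.smul_left t c x

@[simp] theorem ham_apply (c x : R) : B.ham c x = B.bracket c x := rfl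

theorem lie_ham (c c' : R) : ⁅B.ham c, B.ham c'⁆ = B.ham (B.bracket c c') := by
  ext x
  have h := B.jacobi c c' x
  rw [B.antisymm x c, B.antisymm x (B.bracket c c'), ← ham_apply B c' (-_), map_neg,
    ham_apply] at h
  simp only [Derivation.commutator_apply, ham_apply]
  linear_combination h

/-- `iterBracket [c₁, …, cₙ] x = {cₙ, … {c₂, {c₁, x}} …}`. -/
def iterBracket : List R → Module.End k R
  | [] => 1
  | c :: l => iterBracket l * (B.ham c : R →ₗ[k] R)

@[simp] theorem iterBracket_cons_apply (c : R) (l : List R) (x : R) :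
    B.iterBracket (c :: l) x = B.iterBracket l (B.bracket c x) := rfl

theorem iterBracket_replicate (n : ℕ) (c : R) :
    B.iterBracket (List.replicate n c) = (B.ham c : R →ₗ[k] R) ^ n := by
  induction n with
  | zero => rfl
  | succ n ih => rw [List.replicate_succ, iterBracket, ih, pow_succ]

theorem iterBracket_mem_of_isPoissonIdeal {I : Ideal R} (hI : IsPoissonIdeal B I) (l : List R)
    {x : R} (hx : x ∈ I) : B.iterBracket l x ∈ I := by
  induction l generalizing x with
  | nil => exact hx
  | cons c l ih => exact ih (hI c x hx)

theorem iterBracket_mul_mem {J : Ideal R} (l : List R) (r : R) {x : R}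
    (hx : ∀ l', B.iterBracket l' x ∈ J) : B.iterBracket l (r * x) ∈ J := by
  induction l generalizing r x with
  | nil => exact J.mul_mem_left r (hx [])
  | cons c l ih =>
    rw [iterBracket_cons_apply, B.leibniz, map_add]
    exact J.add_mem (ih _ hx) (ih r fun l' ↦ hx (c :: l'))

theorem le_poissonCore {I J : Ideal R} (hI : IsPoissonIdeal B I) (hIJ : I ≤ J) :
    I ≤ poissonCore B J :=
  le_sSup ⟨hI, hIJ⟩

theorem mem_poissonCore_iff {J : Ideal R} {x : R} :
    x ∈ poissonCore B J ↔ ∀ l, B.iterBracket l x ∈ J := by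
  let K : Ideal R :=
    { carrier := {x | ∀ l, B.iterBracket l x ∈ J}
      add_mem' := fun hx hy l ↦ by rw [map_add]; exact J.add_mem (hx l) (hy l)
      zero_mem' := fun l ↦ by rw [map_zero]; exact J.zero_mem
      smul_mem' := fun r _ hx l ↦ B.iterBracket_mul_mem l r hx }
  have hK : IsPoissonIdeal B K := fun a _ hx l ↦ hx (a :: l)
  refine ⟨fun hx ↦ ?_, fun hx ↦ B.le_poissonCore hK (fun y hy ↦ hy []) hx⟩
  refine (sSup_le fun I hI y hy l ↦ ?_ : poissonCore B J ≤ K) hx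
  exact hI.2 (B.iterBracket_mem_of_isPoissonIdeal hI.1 l hy)

theorem poissonCore_le (J : Ideal R) : poissonCore B J ≤ J :=
  fun _ hx ↦ B.mem_poissonCore_iff.1 hx []

theorem isPoissonIdeal_poissonCore (J : Ideal R) : IsPoissonIdeal B (poissonCore B J) :=
  fun a _ hx ↦ B.mem_poissonCore_iff.2 fun l ↦ B.mem_poissonCore_iff.1 hx (a :: l)

theorem exists_minimal_iterBracket_notMem {J : Ideal R} {x : R} (hx : x ∉ poissonCore B J) :
    ∃ (n : ℕ) (w : Fin n → R), B.iterBracket (List.ofFn w) x ∉ J ∧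
      ∀ l : List R, l.length < n → B.iterBracket l x ∈ J := by
  classical
  have hex : ∃ n, ∃ l : List R, l.length = n ∧ B.iterBracket l x ∉ J := by
    simpa [B.mem_poissonCore_iff] using hx
  obtain ⟨l, hl, hlx⟩ := Nat.find_spec hex
  refine ⟨l.length, l.get, by rwa [List.ofFn_get], fun l' hl' ↦ ?_⟩
  by_contra h
  exact Nat.find_min hex (hl ▸ hl') ⟨l', rfl, h⟩

-- Swapping two adjacent letters changes the bracket by a shorter one, by Jacobi.
theorem iterBracket_sub_mem_of_perm {J : Ideal R} {l₁ l₂ : List R} (h : l₁.Perm l₂) {x : R}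
    (hx : ∀ l : List R, l.length < l₁.length → B.iterBracket l x ∈ J) :
    B.iterBracket l₁ x - B.iterBracket l₂ x ∈ J := by
  induction h generalizing x with
  | nil => simp
  | cons c _ ih =>
    exact ih fun l hl ↦ hx (c :: l) (by simpa using hl)
  | swap c c' l =>
    have hcomm := congrArg (· x) (B.lie_ham c c')
    simp only [Derivation.commutator_apply, ham_apply] at hcomm
    rw [iterBracket_cons_apply, iterBracket_cons_apply, iterBracket_cons_apply,
      iterBracket_cons_apply, ← map_sub, hcomm]
    exact hx (B.bracket c c' :: l) (by simp)
  | trans h₁₂ _ ih₁₂ ih₂₃ =>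
    simpa using J.add_mem (ih₁₂ hx) (ih₂₃ fun l hl ↦ hx l (h₁₂.length_eq ▸ hl))

theorem iterBracket_replicate_sum {ι : Type*} [Fintype ι] (c : ι → R) (t : ι → k) (n : ℕ) :
    B.iterBracket (List.replicate n (∑ i, t i • c i))
      = ∑ f : Fin n → ι, (∏ j, t (f j)) • B.iterBracket (List.ofFn (c ∘ f)) := by
  induction n with
  | zero => simp
  | succ n ih =>
    have hz :
        (B.ham (∑ i, t i • c i) : R →ₗ[k] R) = ∑ i, t i • (B.ham (c i) : R →ₗ[k] R) := by
      ext x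
      rw [Derivation.coeFn_coe, map_sum, ← Derivation.coeFnAddMonoidHom_apply, map_sum]
      simp
    rw [List.replicate_succ, iterBracket, ih, hz, Finset.sum_mul,
      ← (Fin.consEquiv fun _ ↦ ι).sum_comp, Fintype.sum_prod_type, Finset.sum_comm]
    refine Finset.sum_congr rfl fun f _ ↦ ?_
    rw [Finset.mul_sum]
    refine Finset.sum_congr rfl fun i _ ↦ ?_
    simp [Fin.prod_univ_succ, List.ofFn_succ, iterBracket, smul_smul]
    rfl

section Polynomial

open MvPolynomial

variable {ι : Type*} [Fintype ι]

noncomputable def iterBracketPoly (J : Ideal R) (c : ι → R) (n : ℕ) (x : R) :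
    MvPolynomial ι (R ⧸ J) :=
  ∑ f : Fin n → ι, C (Ideal.Quotient.mk J (B.iterBracket (List.ofFn (c ∘ f)) x)) * ∏ j, X (f j)

theorem eval_iterBracketPoly (J : Ideal R) (c : ι → R) (n : ℕ) (x : R) (t : ι → k) :
    eval (algebraMap k (R ⧸ J) ∘ t) (B.iterBracketPoly J c n x)
      = Ideal.Quotient.mk J (B.iterBracket (List.replicate n (∑ i, t i • c i)) x) := by
  rw [iterBracketPoly, B.iterBracket_replicate_sum, LinearMap.sum_apply, map_sum, map_sum]
  refine Finset.sum_congr rfl fun f _ ↦ ?_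
  simp [Algebra.smul_def, mul_comm]

end Polynomial

theorem exists_isMaximal_le_poissonCore_notMem [IsJacobsonRing R] {Q : Ideal R} [Q.IsPrime]
    (hQ : IsPoissonIdeal B Q) {f : R} (hf : f ∉ Q) :
    ∃ M : Ideal R, M.IsMaximal ∧ Q ≤ poissonCore B M ∧ f ∉ poissonCore B M := by
  rw [← IsJacobsonRing.out ‹_› (Ideal.IsPrime.isRadical ‹Q.IsPrime›), Ideal.jacobson,
    Submodule.mem_sInf] at hf
  obtain ⟨M, ⟨hQM, hM⟩, hfM⟩ := not_forall₂.1 hf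
  exact ⟨M, hM, B.le_poissonCore hQ hQM, fun h ↦ hfM (B.poissonCore_le M h)⟩

end

section Prime

open MvPolynomial

variable {k R : Type*} [Field k] [CharZero k] [CommRing R] [Algebra k R] (B : PoissonBracket k R)

theorem iterBracketPoly_ne_zero {J : Ideal R} [J.IsPrime] {ι : Type*} [Fintype ι] {c : ι → R}
    {n : ℕ} {x : R} (f₀ : Fin n → ι) (hf₀ : B.iterBracket (List.ofFn (c ∘ f₀)) x ∉ J)
    (hmin : ∀ l : List R, l.length < n → B.iterBracket l x ∈ J) :
    B.iterBracketPoly J c n x ≠ 0 := by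
  classical
  set a : (Fin n → ι) → R ⧸ J := fun f ↦
    Ideal.Quotient.mk J (B.iterBracket (List.ofFn (c ∘ f)) x)
  set deg : (Fin n → ι) → ι →₀ ℕ := fun f ↦ ∑ j, Finsupp.single (f j) 1
  set S := Finset.univ.filter fun f ↦ deg f = deg f₀
  have hterm (f : Fin n → ι) :
      coeff (deg f₀) (C (a f) * ∏ j, X (f j)) = if deg f = deg f₀ then a f else 0 := by
    rw [coeff_C_mul, show ∏ j, (X (f j) : MvPolynomial ι (R ⧸ J)) = monomial (deg f) 1 from
      (monomial_sum_one _ _).symm, coeff_monomial]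
    split_ifs <;> simp
  have hsymm (f : Fin n → ι) (hf : deg f = deg f₀) : a f = a f₀ := by
    have hperm : (List.ofFn (c ∘ f)).Perm (List.ofFn (c ∘ f₀)) := by
      rw [← List.map_ofFn, ← List.map_ofFn]
      exact (List.perm_ofFn_of_sum_single_eq hf).map c
    exact Ideal.Quotient.eq.2
      (B.iterBracket_sub_mem_of_perm hperm fun l hl ↦ hmin l (by simpa using hl))
  -- The coefficient of the monomial of `f₀` collects all rearrangements of `f₀`, which give the
  -- same class by symmetry.
  have hcoeff : coeff (deg f₀) (B.iterBracketPoly J c n x) = (S.card : R ⧸ J) * a f₀ := by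
    rw [iterBracketPoly, coeff_sum, Finset.sum_congr rfl fun f _ ↦ hterm f, ← Finset.sum_filter,
      Finset.sum_congr rfl fun f hf ↦ hsymm f (Finset.mem_filter.1 hf).2, Finset.sum_const,
      nsmul_eq_mul]
  have hcard : (S.card : R ⧸ J) ≠ 0 := by
    rw [← _root_.map_natCast (algebraMap k (R ⧸ J)), map_ne_zero]
    have hf₀S : f₀ ∈ S := Finset.mem_filter.2 ⟨Finset.mem_univ _, rfl⟩
    exact Nat.cast_ne_zero.2 (Finset.card_pos.2 ⟨f₀, hf₀S⟩).ne'
  have ha₀ : a f₀ ≠ 0 := by simpa [a, Ideal.Quotient.eq_zero_iff_mem] using hf₀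
  intro h0
  rw [h0, coeff_zero] at hcoeff
  exact mul_ne_zero hcard ha₀ hcoeff.symm

theorem isPrime_poissonCore (J : Ideal R) [J.IsPrime] : (poissonCore B J).IsPrime := by
  refine ⟨ne_top_of_le_ne_top Ideal.IsPrime.ne_top' (B.poissonCore_le J), fun {a b} hab ↦ ?_⟩
  by_contra! hnot
  obtain ⟨p, u, hu, hp⟩ := B.exists_minimal_iterBracket_notMem hnot.1
  obtain ⟨q, v, hv, hq⟩ := B.exists_minimal_iterBracket_notMem hnot.2
  set c : Fin p ⊕ Fin q → R := Sum.elim u v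
  obtain ⟨t, ht⟩ := MvPolynomial.exists_eval_algebraMap_ne_zero (k := k)
    (mul_ne_zero (B.iterBracketPoly_ne_zero (c := c) Sum.inl hu hp)
      (B.iterBracketPoly_ne_zero (c := c) Sum.inr hv hq))
  rw [map_mul, eval_iterBracketPoly, eval_iterBracketPoly] at ht
  set z := ∑ i, t i • c i
  have hiter (n : ℕ) (y : R) : B.iterBracket (List.replicate n z) y = (B.ham z)^[n] y := by
    rw [iterBracket_replicate, Module.End.pow_apply, Derivation.coeFn_coe]
  have hpa : (B.ham z)^[p] a ∉ J := by
    rw [← hiter, ← Ideal.Quotient.eq_zero_iff_mem]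
    exact left_ne_zero_of_mul ht
  have hqb : (B.ham z)^[q] b ∉ J := by
    rw [← hiter, ← Ideal.Quotient.eq_zero_iff_mem]
    exact right_ne_zero_of_mul ht
  refine (B.ham z).iterate_mul_notMem (fun i hi ↦ ?_) (fun j hj ↦ ?_) hpa hqb ?_
  · exact hiter i a ▸ hp _ (by simpa using hi)
  · exact hiter j b ▸ hq _ (by simpa using hj)
  · exact hiter (p + q) (a * b) ▸ B.mem_poissonCore_iff.1 hab _

end Prime

end PoissonBracket

/-- for a commutative affine Poisson algebra over a characteristic-zero field,
the inclusion of the Poisson-primitive spectrum into the Poisson prime spectrum is a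
quasi-homeomorphism; equivalently, every prime Poisson ideal is an intersection of
Poisson-primitive ideals. -/
theorem pPrim_quasiHomeomorphism (k R : Type*) [Field k] [CharZero k] [CommRing R]
    [Algebra k R] [Algebra.FiniteType k R] (B : PoissonBracket k R) :
    (∀ F : Set {p : PrimeSpectrum R // IsPoissonIdeal B p.asIdeal}, IsClosed F →
      closure (F ∩ {p | IsPoissonPrimitive B p.1.asIdeal}) = F) ∧
    (∀ Q : Ideal R, Q.IsPrime → IsPoissonIdeal B Q →
      Q = sInf {I : Ideal R | IsPoissonPrimitive B I ∧ Q ≤ I}) := by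
  have : IsJacobsonRing R := isJacobsonRing_of_finiteType (A := k)
  refine ⟨fun F hF ↦ ?_, fun Q hQ hQP ↦ ?_⟩
  · refine subset_antisymm (closure_minimal Set.inter_subset_left hF) fun p hp ↦ ?_
    rw [(PrimeSpectrum.isTopologicalBasis_basic_opens.isInducing
      Topology.IsEmbedding.subtypeVal.isInducing).mem_closure_iff]
    rintro _ ⟨_, ⟨f, rfl⟩, rfl⟩ hpf
    obtain ⟨M, hM, hle, hfM⟩ := B.exists_isMaximal_le_poissonCore_notMem p.2 hpf
    let q : {p : PrimeSpectrum R // IsPoissonIdeal B p.asIdeal} :=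
      ⟨⟨poissonCore B M, B.isPrime_poissonCore M⟩, B.isPoissonIdeal_poissonCore M⟩
    have hpq : Specializes p q := Topology.IsEmbedding.subtypeVal.isInducing.specializes_iff.1
      ((PrimeSpectrum.le_iff_specializes _ _).1 hle)
    exact ⟨q, hfM, hpq.mem_closed hF hp, M, hM, rfl⟩
  · refine le_antisymm (le_sInf fun I hI ↦ hI.2) fun f hf ↦ by_contra fun hfQ ↦ ?_
    obtain ⟨M, hM, hle, hfM⟩ := B.exists_isMaximal_le_poissonCore_notMem hQP hfQ
    exact hfM (Submodule.mem_sInf.1 hf _ ⟨⟨M, hM, rfl⟩, hle⟩)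
end

section
/- Let X' and Y' be topological spaces that are noetherian and sauber (every nonempty irreducible closed subset has exactly one generic point). Let X ⊆ X' and Y ⊆ Y' be subspaces such that the inclusions are quasi-homeomorphisms, i.e. for every closed F ⊆ X' the closure of F ∩ X equals F, and for every closed G ⊆ Y' the closure of G ∩ Y equals G. Then every continuous map φ : X → Y extends uniquely to a continuous map φ' : X' → Y' (meaning φ'(x) = φ(x) for all x ∈ X). Moreover, if φ is a homeomorphism, then φ' is a homeomorphism. -/
/-!
A very dense subspace `X ⊆ X'` (one whose inclusion is a quasi-homeomorphism) has the same
lattice of closed sets as `X'`, and a sober space is determined by its lattice of closed sets.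
So a point `x` of `X'` is sent to the generic point of the irreducible closed set
`closure (φ (X ∩ closure {x}))`; the preimage of a closed `G` under this map is the closed set of
`X'` whose trace on `X` is `φ⁻¹ G`, which gives continuity. Two continuous maps agreeing on `X`
send each point to points lying in the same closed sets, hence to the same point of a
T₀ space; applied to the composites of the extensions of `φ` and `φ⁻¹`, this makes the
extension of a homeomorphism a homeomorphism.
-/

open Set Topology

section

variable {α β : Type*} [TopologicalSpace α] [TopologicalSpace β]

theorem quasiSober_of_existsUnique_isGenericPoint
    (h : ∀ S : Set α, IsClosed S → IsIrreducible S → ∃! x, x ∈ S ∧ closure {x} = S) :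
    QuasiSober α where
  sober hS hS' := (h _ hS' hS).exists.imp fun _ hx ↦ hx.2

theorem t0Space_of_existsUnique_isGenericPoint
    (h : ∀ S : Set α, IsClosed S → IsIrreducible S → ∃! x, x ∈ S ∧ closure {x} = S) :
    T0Space α := by
  refine (t0Space_iff_inseparable α).2 fun x y hxy ↦ ?_
  rw [inseparable_iff_closure_eq] at hxy
  exact (h _ isClosed_closure isIrreducible_singleton.closure).unique
    ⟨hxy ▸ subset_closure rfl, hxy⟩ ⟨subset_closure rfl, rfl⟩

theorem Topology.IsInducing.isPreirreducible_of_image {f : α → β} (hf : IsInducing f)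
    {s : Set α} (h : IsPreirreducible (f '' s)) : IsPreirreducible s := by
  rintro u v hu hv ⟨a, has, hau⟩ ⟨b, hbs, hbv⟩
  obtain ⟨U, hU, rfl⟩ := hf.isOpen_iff.mp hu
  obtain ⟨V, hV, rfl⟩ := hf.isOpen_iff.mp hv
  obtain ⟨_, ⟨c, hcs, rfl⟩, hcU, hcV⟩ :=
    h U V hU hV ⟨f a, mem_image_of_mem f has, hau⟩ ⟨f b, mem_image_of_mem f hbs, hbv⟩
  exact ⟨c, hcs, hcU, hcV⟩

/-- EGA's *very dense* subsets: those whose inclusion is a quasi-homeomorphism. -/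
def Set.IsVeryDense (X : Set α) : Prop :=
  ∀ F : Set α, IsClosed F → closure (F ∩ X) = F

namespace Set.IsVeryDense

variable {X : Set α} (hX : X.IsVeryDense)
include hX

theorem inter_closure_singleton_subset_iff {K : Set α} (hK : IsClosed K) {x : α} :
    X ∩ closure {x} ⊆ K ↔ x ∈ K := by
  refine ⟨fun h ↦ ?_, fun hx ↦ inter_subset_right.trans (closure_minimal (by simpa) hK)⟩
  have : closure (closure {x} ∩ X) ⊆ K := closure_minimal (inter_comm _ _ ▸ h) hK
  rw [hX _ isClosed_closure] at this
  exact this (subset_closure rfl)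

theorem isIrreducible_inter_closure_singleton (x : α) : IsIrreducible (X ∩ closure {x}) := by
  rw [inter_comm, ← isIrreducible_iff_closure, hX _ isClosed_closure]
  exact isIrreducible_singleton.closure

theorem isIrreducible_preimage_val_closure_singleton (x : α) :
    IsIrreducible (((↑) : X → α) ⁻¹' closure {x}) := by
  have h := hX.isIrreducible_inter_closure_singleton x
  rw [← Subtype.image_preimage_coe] at h
  exact ⟨h.nonempty.of_image,
    IsInducing.subtypeVal.isPreirreducible_of_image h.isPreirreducible⟩

theorem specializes_of_eqOn {f g : α → β} (hf : Continuous f) (hg : Continuous g)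
    (h : EqOn f g X) (x : α) : f x ⤳ g x := by
  refine specializes_iff_forall_closed.2 fun G hG hx ↦ ?_
  have hx' : x ∈ closure (f ⁻¹' G ∩ X) := by rwa [hX _ (hG.preimage hf)]
  refine closure_minimal (fun y hy ↦ ?_) (hG.preimage hg) hx'
  rw [mem_preimage, ← h hy.2]
  exact hy.1

theorem ext_on [T0Space β] {f g : α → β} (hf : Continuous f) (hg : Continuous g)
    (h : EqOn f g X) : f = g :=
  funext fun x ↦ ((hX.specializes_of_eqOn hf hg h x).antisymm
    (hX.specializes_of_eqOn hg hf h.symm x)).eq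

variable [QuasiSober β] {f : X → β} (hf : Continuous f)

noncomputable def extend (x : α) : β :=
  ((hX.isIrreducible_preimage_val_closure_singleton x).image f hf.continuousOn).genericPoint

theorem isGenericPoint_extend (x : α) :
    IsGenericPoint (hX.extend hf x) (closure (f '' ((↑) ⁻¹' closure {x}))) :=
  IsIrreducible.isGenericPoint_genericPoint_closure _

theorem preimage_extend {G : Set β} (hG : IsClosed G) {K : Set α} (hK : IsClosed K)
    (hKG : (↑) ⁻¹' K = f ⁻¹' G) : hX.extend hf ⁻¹' G = K := by
  ext x
  rw [mem_preimage, (hX.isGenericPoint_extend hf x).mem_closed_set_iff hG,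
    hG.closure_subset_iff, image_subset_iff, ← hKG, ← image_subset_iff,
    Subtype.image_preimage_coe, hX.inter_closure_singleton_subset_iff hK]

theorem continuous_extend : Continuous (hX.extend hf) := by
  refine continuous_iff_isClosed.2 fun G hG ↦ ?_
  obtain ⟨K, hK, hKG⟩ := isClosed_induced_iff.mp (hG.preimage hf)
  rwa [hX.preimage_extend hf hG hK hKG]

theorem extend_coe [T0Space β] (x : X) : hX.extend hf x = f x := by
  refine (hX.isGenericPoint_extend hf x).eq ?_
  rw [← image_singleton (f := Subtype.val),
    ← IsInducing.subtypeVal.closure_eq_preimage_closure_image,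
    closure_image_closure hf, image_singleton]
  exact isGenericPoint_closure

theorem isHomeomorph_extend [QuasiSober α] [T0Space α] [T0Space β] {Y : Set β}
    (hY : Y.IsVeryDense) {φ : X → Y} (hφ : IsHomeomorph φ) :
    IsHomeomorph (hX.extend (continuous_subtype_val.comp hφ.continuous)) := by
  obtain ⟨e, rfl⟩ := isHomeomorph_iff_exists_homeomorph.1 hφ
  have hF := hX.continuous_extend (continuous_subtype_val.comp e.continuous)
  have hG := hY.continuous_extend (continuous_subtype_val.comp e.symm.continuous)
  refine isHomeomorph_iff_exists_inverse.2 ⟨hF, _, congrFun ?_, congrFun ?_, hG⟩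
  · refine hX.ext_on (hG.comp hF) continuous_id fun x hx ↦ ?_
    lift x to X using hx
    simp [hX.extend_coe, hY.extend_coe]
  · refine hY.ext_on (hF.comp hG) continuous_id fun y hy ↦ ?_
    lift y to Y using hy
    simp [hX.extend_coe, hY.extend_coe]

end Set.IsVeryDense

end

theorem extend_continuous_of_quasiHomeomorphism_general (X' Y' : Type*)
    [TopologicalSpace X'] [TopologicalSpace Y']
    (hsX : ∀ F : Set X', IsClosed F → IsIrreducible F → ∃! x, x ∈ F ∧ closure {x} = F)
    (hsY : ∀ G : Set Y', IsClosed G → IsIrreducible G → ∃! y, y ∈ G ∧ closure {y} = G)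
    (X : Set X') (Y : Set Y')
    (hqX : ∀ F : Set X', IsClosed F → closure (F ∩ X) = F)
    (hqY : ∀ G : Set Y', IsClosed G → closure (G ∩ Y) = G)
    (φ : X → Y) (hφ : Continuous φ) :
    ∃ φ' : X' → Y', Continuous φ' ∧ (∀ x : X, φ' x = (φ x : Y')) ∧
      (∀ ψ : X' → Y', Continuous ψ → (∀ x : X, ψ x = (φ x : Y')) → ψ = φ') ∧
      (IsHomeomorph φ → IsHomeomorph φ') := by
  have := quasiSober_of_existsUnique_isGenericPoint hsX
  have := quasiSober_of_existsUnique_isGenericPoint hsY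
  have := t0Space_of_existsUnique_isGenericPoint hsX
  have := t0Space_of_existsUnique_isGenericPoint hsY
  have hX : X.IsVeryDense := hqX
  have hY : Y.IsVeryDense := hqY
  have hf : Continuous fun x ↦ (φ x : Y') := continuous_subtype_val.comp hφ
  refine ⟨hX.extend hf, hX.continuous_extend hf, hX.extend_coe hf,
    fun ψ hψ hψφ ↦ ?_, hX.isHomeomorph_extend hY⟩
  exact hX.ext_on hψ (hX.continuous_extend hf) fun x hx ↦
    (hψφ ⟨x, hx⟩).trans (hX.extend_coe hf _).symm

/-- a continuous map between subspaces whose inclusions are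
quasi-homeomorphisms into sauber noetherian spaces extends uniquely to a continuous map
between the ambient spaces; moreover, a homeomorphism extends to a homeomorphism. -/
theorem extend_continuous_of_quasiHomeomorphism (X' Y' : Type*)
    [TopologicalSpace X'] [TopologicalSpace Y']
    [TopologicalSpace.NoetherianSpace X'] [TopologicalSpace.NoetherianSpace Y']
    (hsX : ∀ F : Set X', IsClosed F → IsIrreducible F → ∃! x, x ∈ F ∧ closure {x} = F)
    (hsY : ∀ G : Set Y', IsClosed G → IsIrreducible G → ∃! y, y ∈ G ∧ closure {y} = G)
    (X : Set X') (Y : Set Y')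
    (hqX : ∀ F : Set X', IsClosed F → closure (F ∩ X) = F)
    (hqY : ∀ G : Set Y', IsClosed G → closure (G ∩ Y) = G)
    (φ : X → Y) (hφ : Continuous φ) :
    ∃ φ' : X' → Y', Continuous φ' ∧ (∀ x : X, φ' x = (φ x : Y')) ∧
      (∀ ψ : X' → Y', Continuous ψ → (∀ x : X, ψ x = (φ x : Y')) → ψ = φ') ∧
      (IsHomeomorph φ → IsHomeomorph φ') :=
  extend_continuous_of_quasiHomeomorphism_general X' Y' hsX hsY X Y hqX hqY φ hφ
end

section
/- Let k be an algebraically closed field of characteristic zero and let R = k[x,y] be the polynomial ring in two variables, equipped with a Poisson bracket satisfying {x,y} = xy. Then the prime ideals of R that are Poisson ideals are exactly the following: the maximal ideals ⟨x − α, y⟩ for α ∈ k, the maximal ideals ⟨x, y − β⟩ for β ∈ k, the height one primes ⟨x⟩ and ⟨y⟩, and the zero ideal ⟨0⟩. -/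
open MvPolynomial

namespace PoissonBracket

section Hamiltonian

variable {k R : Type*} [CommRing k] [CommRing R] [Algebra k R] (B : PoissonBracket k R)

def hamiltonian_s14 (a : R) : Derivation k R R :=
  Derivation.mk' ⟨⟨B.bracket a, B.add_right a⟩, fun t b => B.smul_right t a b⟩ fun b c => by
    simp only [LinearMap.coe_mk, AddHom.coe_mk, B.leibniz, smul_eq_mul]
    ring

@[simp]
lemma hamiltonian_apply (a b : R) : B.hamiltonian_s14 a b = B.bracket a b := rfl

lemma isPoissonIdeal_bot : IsPoissonIdeal B ⊥ := fun a f hf => by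
  rw [(Submodule.mem_bot _).1 hf, ← hamiltonian_apply, map_zero]
  exact Submodule.zero_mem _

end Hamiltonian

lemma bracket_self {k R : Type*} [Field k] [NeZero (2 : k)] [CommRing R] [Algebra k R]
    (B : PoissonBracket k R) (a : R) : B.bracket a a = 0 := by
  have h : (2 : k) • B.bracket a a = 0 := by
    rw [two_smul, ← neg_eq_iff_add_eq_zero, ← B.antisymm]
  exact (smul_eq_zero.1 h).resolve_left two_ne_zero

end PoissonBracket

namespace MvPolynomial

variable {σ R : Type*} [CommRing R]

lemma derivation_mem_of_forall_X_mem {D : Derivation R (MvPolynomial σ R) (MvPolynomial σ R)}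
    {I : Ideal (MvPolynomial σ R)} (h : ∀ i, D (X i) ∈ I) (f : MvPolynomial σ R) :
    D f ∈ I := by
  induction f using MvPolynomial.induction_on with
  | C a => simp
  | add p q hp hq => simpa using I.add_mem hp hq
  | mul_X p i hp =>
    rw [D.leibniz, smul_eq_mul, smul_eq_mul]
    exact I.add_mem (I.mul_mem_left _ (h i)) (I.mul_mem_left _ hp)

lemma totalDegree_pderiv_lt {i : σ} {f : MvPolynomial σ R} (h : pderiv i f ≠ 0) :
    (pderiv i f).totalDegree < f.totalDegree := by
  obtain ⟨d, hd, hdeg⟩ := Finset.exists_max_image _ (fun d => d.sum fun _ e => e)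
    (support_nonempty.2 h)
  have hf : d + Finsupp.single i 1 ∈ f.support := by
    rw [mem_support_iff, coeff_pderiv] at hd
    exact mem_support_iff.2 (left_ne_zero_of_mul hd)
  calc (pderiv i f).totalDegree = d.sum fun _ e => e :=
        le_antisymm (Finset.sup_le hdeg) (le_totalDegree hd)
    _ < (d + Finsupp.single i 1).sum fun _ e => e := by
        rw [Finsupp.sum_add_index' (fun _ => rfl) (fun _ _ _ => rfl),
          Finsupp.sum_single_index rfl]
        exact Nat.lt_succ_self _
    _ ≤ f.totalDegree := le_totalDegree hf

lemma eq_C_of_forall_pderiv_eq_zero [NoZeroDivisors R] [CharZero R] {f : MvPolynomial σ R}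
    (h : ∀ i, pderiv i f = 0) : f = C (coeff 0 f) := by
  classical
  ext m
  rcases eq_or_ne m 0 with rfl | hm
  · simp
  obtain ⟨i, hi⟩ : ∃ i, m i ≠ 0 := by
    by_contra! hm'
    exact hm (Finsupp.ext hm')
  have hcoeff := coeff_pderiv (i := i) f (m - Finsupp.single i 1)
  rw [h i, coeff_zero,
    tsub_add_cancel_of_le (Finsupp.single_le_iff.2 (Nat.one_le_iff_ne_zero.2 hi))] at hcoeff
  rw [coeff_C, if_neg (Ne.symm hm)]
  exact (mul_eq_zero.1 hcoeff.symm).resolve_right (Nat.cast_add_one_ne_zero _)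

lemma eq_bot_of_forall_pderiv_mem {k : Type*} [Field k] [CharZero k]
    {I : Ideal (MvPolynomial σ k)} (hI : I ≠ ⊤) (h : ∀ i, ∀ f ∈ I, pderiv i f ∈ I) :
    I = ⊥ := by
  suffices ∀ n, ∀ f ∈ I, f.totalDegree = n → f = 0 from
    (Submodule.eq_bot_iff I).2 fun f hf => this _ f hf rfl
  intro n
  induction n using Nat.strong_induction_on with
  | _ n ih =>
    intro f hf hn
    by_cases hder : ∃ i, pderiv i f ≠ 0
    · obtain ⟨i, hi⟩ := hder
      exact absurd (ih _ (hn ▸ totalDegree_pderiv_lt hi) _ (h i f hf) rfl) hi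
    · have hC := eq_C_of_forall_pderiv_eq_zero (not_exists_not.1 hder)
      by_contra hf0
      have hc : coeff 0 f ≠ 0 := fun hc => hf0 (by rw [hC, hc, map_zero])
      exact hI (I.eq_top_of_isUnit_mem (hC ▸ hf) ((isUnit_iff_ne_zero.2 hc).map C))

variable {σ R : Type*} [CommRing R]

lemma sub_mem_of_forall_X_sub_mem {ψ : MvPolynomial σ R →ₐ[R] MvPolynomial σ R}
    {I : Ideal (MvPolynomial σ R)} (h : ∀ i, X i - ψ (X i) ∈ I) (f : MvPolynomial σ R) :
    f - ψ f ∈ I := by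
  have hψ : (Ideal.Quotient.mkₐ R I).comp ψ = Ideal.Quotient.mkₐ R I :=
    algHom_ext fun i => (Ideal.Quotient.eq.2 (h i)).symm
  exact Ideal.Quotient.eq.1 (AlgHom.congr_fun hψ f).symm

lemma sub_aeval_update_X_zero_mem_span_X [DecidableEq σ] (i : σ) (f : MvPolynomial σ R) :
    f - aeval (Function.update X i 0) f ∈ Ideal.span {X i} :=
  sub_mem_of_forall_X_sub_mem (fun l => by rcases eq_or_ne l i with rfl | hl <;> simp [*]) f

lemma ker_aeval_update_X_zero [DecidableEq σ] (i : σ) :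
    RingHom.ker (aeval (Function.update X i 0) : MvPolynomial σ R →ₐ[R] MvPolynomial σ R) =
      Ideal.span {X i} := by
  refine le_antisymm (fun f hf => ?_) ?_
  · have hf' := sub_aeval_update_X_zero_mem_span_X i f
    rwa [RingHom.mem_ker.1 hf, sub_zero] at hf'
  · rw [Ideal.span_le, Set.singleton_subset_iff]
    simp

lemma isPrime_span_X [IsDomain R] (i : σ) :
    (Ideal.span {X i} : Ideal (MvPolynomial σ R)).IsPrime := by
  classical
  rw [← ker_aeval_update_X_zero]
  exact RingHom.ker_isPrime _

end MvPolynomial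

lemma Polynomial.exists_X_sub_C_mem_of_isPrime {k : Type*} [Field k] [IsAlgClosed k]
    {P : Ideal (Polynomial k)} (hP : P.IsPrime) (hP0 : P ≠ ⊥) :
    ∃ c, Polynomial.X - Polynomial.C c ∈ P := by
  obtain ⟨q, hqP, hq⟩ := hP.exists_mem_prime_of_ne_bot hP0
  obtain ⟨c, hc⟩ :=
    IsAlgClosed.exists_root q (Polynomial.degree_pos_of_irreducible hq.irreducible).ne'
  obtain ⟨u, hu⟩ := ((Polynomial.irreducible_X_sub_C c).associated_of_dvd hq.irreducible
    (Polynomial.dvd_iff_isRoot.2 hc)).symm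
  exact ⟨c, hu ▸ P.mul_mem_right _ hqP⟩

namespace MvPolynomial

variable {k : Type*} [Field k]

lemma isMaximal_span_X_X_sub_C {i j : Fin 2} (hij : i ≠ j) (c : k) :
    (Ideal.span {X i, X j - C c} : Ideal (MvPolynomial (Fin 2) k)).IsMaximal := by
  let a : Fin 2 → k := Function.update (fun _ => c) i 0
  let ψ := (Algebra.ofId k (MvPolynomial (Fin 2) k)).comp (aeval a)
  suffices h : Ideal.span {X i, X j - C c} =
      RingHom.ker (aeval a : MvPolynomial (Fin 2) k →ₐ[k] k) by
    rw [h]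
    exact RingHom.ker_isMaximal_of_surjective _ fun t => ⟨C t, aeval_C _ _⟩
  apply le_antisymm
  · rw [Ideal.span_le, Set.insert_subset_iff, Set.singleton_subset_iff]
    simp [a, hij.symm]
  · intro f hf
    have hX : ∀ l, X l - ψ (X l) ∈ Ideal.span {X i, X j - C c} := by
      intro l
      rcases eq_or_ne l i with rfl | hl
      · have hψ : ψ (X l) = 0 := by simp [ψ, a]
        rw [hψ, sub_zero]
        exact Ideal.subset_span (by simp)
      · obtain rfl : l = j := by omega
        have hψ : ψ (X l) = C c := by simp [ψ, a, hl]
        rw [hψ]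
        exact Ideal.subset_span (by simp)
    have hf' := sub_mem_of_forall_X_sub_mem hX f
    rwa [AlgHom.comp_apply, RingHom.mem_ker.1 hf, map_zero, sub_zero] at hf'

lemma exists_X_sub_C_mem_of_span_X_lt [IsAlgClosed k] {i j : Fin 2} (hij : i ≠ j)
    {Q : Ideal (MvPolynomial (Fin 2) k)} (hQ : Q.IsPrime) (hlt : Ideal.span {X i} < Q) :
    ∃ c, X j - C c ∈ Q := by
  obtain ⟨f, hfQ, hf⟩ := SetLike.exists_of_lt hlt
  -- `ψ f ∈ k[t]` is the image of `f` in `k[X i, X j] ⧸ ⟨X i⟩ ≅ k[X j]`.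
  let ψ : MvPolynomial (Fin 2) k →ₐ[k] Polynomial k :=
    aeval (Function.update (fun _ => Polynomial.X) i 0)
  have hψ : (Polynomial.aeval (X j)).comp ψ =
      aeval (Function.update (X : Fin 2 → MvPolynomial (Fin 2) k) i 0) := by
    refine algHom_ext fun l => ?_
    rcases eq_or_ne l i with rfl | hl
    · simp [ψ]
    · obtain rfl : l = j := by omega
      simp [ψ, hl]
  have hne : Q.comap (Polynomial.aeval (R := k) (X j : MvPolynomial (Fin 2) k)) ≠ ⊥ := by
    refine (Submodule.ne_bot_iff _).2 ⟨ψ f, ?_, fun hψf => hf ?_⟩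
    · rw [Ideal.mem_comap, ← AlgHom.comp_apply, hψ]
      simpa using Q.sub_mem hfQ (hlt.le (sub_aeval_update_X_zero_mem_span_X i f))
    · rw [← ker_aeval_update_X_zero (R := k), RingHom.mem_ker, ← hψ, AlgHom.comp_apply, hψf,
        map_zero]
  obtain ⟨c, hc⟩ := Polynomial.exists_X_sub_C_mem_of_isPrime (hQ.comap _) hne
  exact ⟨c, by simpa using hc⟩

lemma eq_span_X_or_eq_span_X_X_sub_C [IsAlgClosed k] {i j : Fin 2} (hij : i ≠ j)
    {Q : Ideal (MvPolynomial (Fin 2) k)} (hQ : Q.IsPrime) (hX : X i ∈ Q) :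
    Q = Ideal.span {X i} ∨ ∃ c, Q = Ideal.span {X i, X j - C c} := by
  have hle : Ideal.span {X i} ≤ Q := Ideal.span_singleton_le_iff_mem _ |>.2 hX
  rcases hle.eq_or_lt with h | hlt
  · exact .inl h.symm
  obtain ⟨c, hc⟩ := exists_X_sub_C_mem_of_span_X_lt hij hQ hlt
  refine .inr ⟨c, ((isMaximal_span_X_X_sub_C hij c).eq_of_le hQ.ne_top ?_).symm⟩
  rw [Ideal.span_le, Set.insert_subset_iff, Set.singleton_subset_iff]
  exact ⟨hX, hc⟩

end MvPolynomial

namespace PoissonBracket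

variable {k : Type*} [Field k] [NeZero (2 : k)] {B : PoissonBracket k (MvPolynomial (Fin 2) k)}

lemma bracket_X_zero_left (hB : B.bracket (X 0) (X 1) = X 0 * X 1)
    (f : MvPolynomial (Fin 2) k) :
    B.bracket (X 0) f = X 0 * X 1 * pderiv 1 f := by
  have h : B.hamiltonian_s14 (X 0) = (X 0 * X 1 : MvPolynomial (Fin 2) k) • pderiv 1 :=
    derivation_ext <| Fin.forall_fin_two.2 ⟨by simp [bracket_self, pderiv_X], by simp [hB]⟩
  simpa [Derivation.smul_apply, Derivation.neg_apply] using congr($h f)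

lemma bracket_X_one_left (hB : B.bracket (X 0) (X 1) = X 0 * X 1)
    (f : MvPolynomial (Fin 2) k) :
    B.bracket (X 1) f = -(X 0 * X 1 * pderiv 0 f) := by
  have h : B.hamiltonian_s14 (X 1) = -((X 0 * X 1 : MvPolynomial (Fin 2) k) • pderiv 0) :=
    derivation_ext <| Fin.forall_fin_two.2
      ⟨by simp [B.antisymm (X 1), hB], by simp [bracket_self, pderiv_X]⟩
  simpa [Derivation.smul_apply, Derivation.neg_apply] using congr($h f)

lemma isPoissonIdeal_of_X_mul_X_mem (hB : B.bracket (X 0) (X 1) = X 0 * X 1)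
    {I : Ideal (MvPolynomial (Fin 2) k)} (hI : X 0 * X 1 ∈ I) : IsPoissonIdeal B I := by
  intro a b _
  refine derivation_mem_of_forall_X_mem (D := B.hamiltonian_s14 a) (Fin.forall_fin_two.2 ⟨?_, ?_⟩) b
  · simpa [B.antisymm a, bracket_X_zero_left hB] using I.mul_mem_right _ hI
  · simpa [B.antisymm a, bracket_X_one_left hB] using I.mul_mem_right _ hI

lemma pderiv_mem_of_isPoissonIdeal (hB : B.bracket (X 0) (X 1) = X 0 * X 1)
    {Q : Ideal (MvPolynomial (Fin 2) k)} (hQ : Q.IsPrime) (hP : IsPoissonIdeal B Q)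
    (hx : X 0 ∉ Q) (hy : X 1 ∉ Q) (i : Fin 2) (f : MvPolynomial (Fin 2) k) (hf : f ∈ Q) :
    pderiv i f ∈ Q := by
  have hmul : X 0 * X 1 * pderiv i f ∈ Q := by
    fin_cases i
    · simpa [bracket_X_one_left hB] using hP (X 1) f hf
    · simpa [bracket_X_zero_left hB] using hP (X 0) f hf
  exact (hQ.mem_or_mem hmul).resolve_left (hQ.mul_notMem hx hy)

end PoissonBracket

open MvPolynomial in
/-- the classification of prime Poisson ideals of `k[x,y]` with
`{x,y} = xy`, for `k` algebraically closed of characteristic zero. -/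
theorem poisson_primes_of_quantum_plane_limit (k : Type*) [Field k] [CharZero k]
    [IsAlgClosed k] (B : PoissonBracket k (MvPolynomial (Fin 2) k))
    (hB : B.bracket (X 0) (X 1) = X 0 * X 1) (Q : Ideal (MvPolynomial (Fin 2) k)) :
    (Q.IsPrime ∧ IsPoissonIdeal B Q) ↔
      ((∃ α : k, Q = Ideal.span {X 0 - C α, X 1}) ∨
       (∃ β : k, Q = Ideal.span {X 0, X 1 - C β}) ∨
       Q = Ideal.span {(X 0 : MvPolynomial (Fin 2) k)} ∨
       Q = Ideal.span {(X 1 : MvPolynomial (Fin 2) k)} ∨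
       Q = ⊥) := by
  constructor
  · rintro ⟨hQ, hP⟩
    by_cases hx : X 0 ∈ Q
    · rcases eq_span_X_or_eq_span_X_X_sub_C zero_ne_one hQ hx with h | h
      exacts [.inr (.inr (.inl h)), .inr (.inl h)]
    by_cases hy : X 1 ∈ Q
    · rcases eq_span_X_or_eq_span_X_X_sub_C one_ne_zero hQ hy with h | ⟨α, h⟩
      exacts [.inr (.inr (.inr (.inl h))), .inl ⟨α, by rw [h, Set.pair_comm]⟩]
    exact .inr (.inr (.inr (.inr (eq_bot_of_forall_pderiv_mem hQ.ne_top
      (B.pderiv_mem_of_isPoissonIdeal hB hQ hP hx hy)))))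
  · have hxy {I : Ideal (MvPolynomial (Fin 2) k)} : X 0 * X 1 ∈ I → IsPoissonIdeal B I :=
      B.isPoissonIdeal_of_X_mul_X_mem hB
    rintro (⟨α, rfl⟩ | ⟨β, rfl⟩ | rfl | rfl | rfl)
    · rw [Set.pair_comm]
      exact ⟨(isMaximal_span_X_X_sub_C one_ne_zero α).isPrime,
        hxy (Ideal.mul_mem_left _ _ (Ideal.subset_span (by simp)))⟩
    · exact ⟨(isMaximal_span_X_X_sub_C zero_ne_one β).isPrime,
        hxy (Ideal.mul_mem_right _ _ (Ideal.subset_span (by simp)))⟩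
    · exact ⟨isPrime_span_X 0, hxy (Ideal.mul_mem_right _ _ (Ideal.mem_span_singleton_self _))⟩
    · exact ⟨isPrime_span_X 1, hxy (Ideal.mul_mem_left _ _ (Ideal.mem_span_singleton_self _))⟩
    · exact ⟨Ideal.isPrime_bot, B.isPoissonIdeal_bot⟩
end
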